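/- Upper tail bound: for every m ≥ 0 and every natural number ℓ, the crowding in-degree process satisfies ∑_{r ≥ ⌈x_m⌉ + ℓ} P m r ≤ exp(−α·ℓ), where the sum runs over integers r with ⌈x_m⌉ + ℓ ≤ r ≤ m. -/
import Mathlib


open Finset Filter

/-- The crowding in-degree process: `P q m r` is the probability of having
accepted `r` edges after `m` proposals, with acceptance probability `q^r`. -/
noncomputable def crowdP (q : ℝ) : ℕ → ℕ → ℝ
  | 0, r => if r = 0 then 1 else 0
  | m + 1, r =>
      crowdP q m r * (1 - q ^ r) +
        (if r = 0 then 0 else crowdP q m (r - 1) * q ^ (r - 1))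

/-- Generating function `G m z = ∑_{r=0}^m P m r · z^r`. -/
noncomputable def crowdG (q : ℝ) (m : ℕ) (z : ℝ) : ℝ :=
  ∑ r ∈ Finset.range (m + 1), crowdP q m r * z ^ r

/-- Centering sequence `x_m = (1/α)·log(1 + (e^α − 1)·m)`. -/
noncomputable def crowdX (α : ℝ) (m : ℕ) : ℝ :=
  (1 / α) * Real.log (1 + (Real.exp α - 1) * m)

/-- Mean `μ_m = ∑_{r=0}^m r · P m r`. -/
noncomputable def crowdMu (q : ℝ) (m : ℕ) : ℝ :=
  ∑ r ∈ Finset.range (m + 1), (r : ℝ) * crowdP q m r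

lemma crowdP_nonneg {q : ℝ} (hq0 : 0 ≤ q) (hq1 : q ≤ 1) :
    ∀ m r, 0 ≤ crowdP q m r := by
  intro m
  induction m with
  | zero => intro r; simp [crowdP]; split <;> norm_num
  | succ n ih =>
    intro r
    have h1 : 0 ≤ 1 - q ^ r := by
      have := pow_le_one₀ hq0 hq1 (n := r); linarith
    have h2 : 0 ≤ q ^ (r - 1) := pow_nonneg hq0 _
    have hP := ih r
    have hP' := ih (r - 1)
    simp only [crowdP]
    split
    · have := mul_nonneg hP h1; linarith
    · exact add_nonneg (mul_nonneg hP h1) (mul_nonneg hP' h2)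

lemma crowdP_eq_zero (q : ℝ) : ∀ m r, m < r → crowdP q m r = 0 := by
  intro m
  induction m with
  | zero => intro r hr; simp [crowdP]; omega
  | succ n ih =>
    intro r hr
    have h1 : crowdP q n r = 0 := ih r (by omega)
    have h2 : r ≠ 0 := by omega
    have h3 : crowdP q n (r - 1) = 0 := ih (r - 1) (by omega)
    simp [crowdP, h1, h2, h3]

lemma crowdG_rec (q z : ℝ) (m : ℕ) :
    crowdG q (m + 1) z =
      crowdG q m z + (z - 1) * ∑ r ∈ Finset.range (m + 1), crowdP q m r * (q * z) ^ r := by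
  unfold crowdG
  have key : ∀ r, crowdP q (m + 1) r * z ^ r =
      crowdP q m r * (1 - q ^ r) * z ^ r +
        (if r = 0 then 0 else crowdP q m (r - 1) * q ^ (r - 1)) * z ^ r := by
    intro r; rcases eq_or_ne r 0 with h | h <;> simp [crowdP, h] <;> ring
  rw [Finset.sum_congr rfl fun r _ => key r, Finset.sum_add_distrib]
  have hA : ∑ r ∈ Finset.range (m + 2), crowdP q m r * (1 - q ^ r) * z ^ r =
      ∑ r ∈ Finset.range (m + 1), crowdP q m r * z ^ r -
        ∑ r ∈ Finset.range (m + 1), crowdP q m r * (q * z) ^ r := by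
    rw [Finset.sum_range_succ, crowdP_eq_zero q m (m + 1) (by omega)]
    rw [← Finset.sum_sub_distrib]
    simp only [zero_mul, add_zero]
    refine Finset.sum_congr rfl fun r _ => ?_
    rw [mul_pow]; ring
  have hB : ∑ r ∈ Finset.range (m + 2),
      (if r = 0 then 0 else crowdP q m (r - 1) * q ^ (r - 1)) * z ^ r =
      z * ∑ r ∈ Finset.range (m + 1), crowdP q m r * (q * z) ^ r := by
    have hterm : ∀ i, (if i + 1 = 0 then 0 else crowdP q m (i + 1 - 1) * q ^ (i + 1 - 1)) * z ^ (i + 1) =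
        z * (crowdP q m i * (q * z) ^ i) := by
      intro i
      rw [if_neg (Nat.succ_ne_zero i)]
      simp only [Nat.add_sub_cancel]
      rw [mul_pow]; ring
    rw [Finset.sum_range_succ' (fun r => (if r = 0 then 0 else crowdP q m (r - 1) * q ^ (r - 1)) * z ^ r) (m + 1),
      Finset.sum_congr rfl (fun i _ => hterm i)]
    simp [Finset.mul_sum]
  rw [hA, hB]; ring

lemma crowdG_one {q : ℝ} (m : ℕ) : crowdG q m 1 = 1 := by
  induction m with
  | zero => simp [crowdG, crowdP]
  | succ n ih => rw [crowdG_rec]; simp [ih]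

lemma crowdG_exp (α : ℝ) (hα : 0 < α) (m : ℕ) :
    crowdG (Real.exp (-α)) m (Real.exp α) = 1 + (Real.exp α - 1) * m := by
  induction m with
  | zero => simp [crowdG, crowdP]
  | succ n ih =>
    rw [crowdG_rec, ih]
    have hqz : Real.exp (-α) * Real.exp α = 1 := by
      rw [← Real.exp_add]; simp
    have : ∑ r ∈ Finset.range (n + 1), crowdP (Real.exp (-α)) n r *
        (Real.exp (-α) * Real.exp α) ^ r = 1 := by
      rw [hqz]
      simpa [crowdG] using crowdG_one (q := Real.exp (-α)) n
    rw [this]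
    push_cast
    ring

theorem stmt_5 (α : ℝ) (hα : 0 < α) (m ℓ : ℕ) :
    ∑ r ∈ Finset.Icc (⌈crowdX α m⌉₊ + ℓ) m, crowdP (Real.exp (-α)) m r ≤
      Real.exp (-α * ℓ) := by
  set q := Real.exp (-α) with hq
  set z := Real.exp α with hz
  set k := ⌈crowdX α m⌉₊ + ℓ with hk
  have hq0 : 0 ≤ q := (Real.exp_pos _).le
  have hq1 : q ≤ 1 := Real.exp_le_one_iff.mpr (by linarith)
  have hz1 : 1 ≤ z := Real.one_le_exp hα.le
  have hzpos : 0 < z := lt_of_lt_of_le one_pos hz1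
  have hA : (0:ℝ) < 1 + (Real.exp α - 1) * m := by
    have : (0:ℝ) ≤ (Real.exp α - 1) * m :=
      mul_nonneg (by linarith [Real.one_le_exp hα.le]) (Nat.cast_nonneg m)
    linarith
  -- key bound: z^k * tail ≤ G
  have hstep : z ^ k * ∑ r ∈ Finset.Icc k m, crowdP q m r ≤ crowdG q m z := by
    rw [Finset.mul_sum]
    have hsub : Finset.Icc k m ⊆ Finset.range (m + 1) := by
      intro r hr; simp only [Finset.mem_Icc] at hr; simp [Finset.mem_range]; omega
    calc ∑ r ∈ Finset.Icc k m, z ^ k * crowdP q m r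
        ≤ ∑ r ∈ Finset.Icc k m, crowdP q m r * z ^ r := by
          refine Finset.sum_le_sum fun r hr => ?_
          simp only [Finset.mem_Icc] at hr
          rw [mul_comm]
          exact mul_le_mul_of_nonneg_left (pow_le_pow_right₀ hz1 hr.1)
            (crowdP_nonneg hq0 hq1 m r)
      _ ≤ crowdG q m z := by
          refine Finset.sum_le_sum_of_subset_of_nonneg hsub fun r _ _ => ?_
          exact mul_nonneg (crowdP_nonneg hq0 hq1 m r) (pow_nonneg hzpos.le r)
  have hG : crowdG q m z = 1 + (Real.exp α - 1) * m := crowdG_exp α hα m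
  have htail : ∑ r ∈ Finset.Icc k m, crowdP q m r ≤
      (1 + (Real.exp α - 1) * m) * (z ^ k)⁻¹ := by
    rw [← hG]
    have hzk : (0:ℝ) < z ^ k := pow_pos hzpos k
    rw [← div_eq_mul_inv, le_div_iff₀ hzk]
    calc (∑ r ∈ Finset.Icc k m, crowdP q m r) * z ^ k
        = z ^ k * ∑ r ∈ Finset.Icc k m, crowdP q m r := by ring
      _ ≤ crowdG q m z := hstep
  refine htail.trans ?_
  -- now show (1 + (e^α−1)m) * z^{-k} ≤ exp(-αℓ)
  have hxk : crowdX α m + ℓ ≤ k := by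
    have := Nat.le_ceil (crowdX α m)
    push_cast [hk]
    have hx0 : 0 ≤ crowdX α m := by
      unfold crowdX
      have hlog : 0 ≤ Real.log (1 + (Real.exp α - 1) * m) :=
        Real.log_nonneg (by nlinarith [Real.one_le_exp hα.le, Nat.cast_nonneg (α := ℝ) m])
      exact mul_nonneg (by positivity) hlog
    linarith
  have hzk : z ^ k = Real.exp (α * k) := by
    rw [hz, ← Real.exp_nat_mul]; ring_nf
  have hex : Real.exp (α * crowdX α m) = 1 + (Real.exp α - 1) * m := by
    unfold crowdX
    rw [show α * ((1/α) * Real.log (1 + (Real.exp α - 1) * m)) =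
        Real.log (1 + (Real.exp α - 1) * m) by field_simp]
    exact Real.exp_log hA
  rw [hzk, ← Real.exp_neg]
  rw [show Real.exp (-α * ℓ) = (1 + (Real.exp α - 1) * m) * Real.exp (-(α * (crowdX α m + ℓ))) by
    rw [← hex, ← Real.exp_add]; ring_nf]
  refine mul_le_mul_of_nonneg_left ?_ hA.le
  exact Real.exp_le_exp.mpr (by nlinarith)
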